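/- For every element w of the free group F_2 on two generators a, b, the element Pal(w) is a palindrome, i.e., ω(Pal(w)) = Pal(w), where ω is the unique anti-automorphism of F_2 fixing a and b (equivalently, ω(w) = ι(w⁻¹), where ι is the automorphism of F_2 sending a to a⁻¹ and b to b⁻¹). -/

import Mathlib

namespace PalWord

/-- The free group on two generators `a`, `b`. -/
abbrev F : Type := FreeGroup Bool

/-- The first generator `a` of the free group `F`. -/
def a : F := FreeGroup.of false

/-- The second generator `b` of the free group `F`. -/
def b : F := FreeGroup.of true

/-- The automorphism `R_a` of `F`, with `a ↦ a`, `b ↦ b a`. -/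
def Ra : MulAut F :=
  MonoidHom.toMulEquiv
    (FreeGroup.lift (fun x => if x then b * a else a))
    (FreeGroup.lift (fun x => if x then b * a⁻¹ else a))
    (by ext x; cases x <;> simp [a, b])
    (by ext x; cases x <;> simp [a, b])

/-- The automorphism `R_b` of `F`, with `a ↦ a b`, `b ↦ b`. -/
def Rb : MulAut F :=
  MonoidHom.toMulEquiv
    (FreeGroup.lift (fun x => if x then b else a * b))
    (FreeGroup.lift (fun x => if x then b else a * b⁻¹))
    (by ext x; cases x <;> simp [a, b])
    (by ext x; cases x <;> simp [a, b])

/-- The homomorphism `w ↦ R_w` from `F` to `Aut(F)`, sending `a` to `R_a` and `b` to `R_b`. -/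
def R : F →* MulAut F := FreeGroup.lift (fun x => if x then Rb else Ra)

/-- The palindromization map `Pal(w) = (a b)⁻¹ · R_w(a b)`. -/
def Pal (w : F) : F := (a * b)⁻¹ * R w (a * b)

/-- The automorphism `ι` of `F` with `a ↦ a⁻¹`, `b ↦ b⁻¹`. -/
def iota : MulAut F :=
  MonoidHom.toMulEquiv
    (FreeGroup.lift (fun x => (FreeGroup.of x)⁻¹))
    (FreeGroup.lift (fun x => (FreeGroup.of x)⁻¹))
    (by ext x; simp)
    (by ext x; simp)

/-- The mirror-image anti-automorphism `ω` of `F`: `ω(w) = ι(w⁻¹)`. -/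
def omega (w : F) : F := iota w⁻¹

end PalWord

/-!
Conjugating `R_w` by `ι` gives `conj(Pal w) ∘ R_w`: both sides are homomorphisms in `w`, the
right-hand one because `Pal` is a crossed homomorphism for `R`, and they agree on `a` and `b`.
Every `R_w` also fixes the commutator `[b, a]`, so `R_w (b a) = [b, a] R_w (a b) = b a Pal(w)`.
Hence `ω(Pal w) = ι(R_w (a b))⁻¹ ι(a b) = Pal(w) R_w(b a) Pal(w)⁻¹ (b a)⁻¹ = Pal(w)`.
-/

open scoped commutatorElement

section Twist

variable {H G : Type*} [Group H] [Group G]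

def MulAut.twistByCocycle (ρ : H →* MulAut G) (p : H → G)
    (hp : ∀ u v, p (u * v) = p u * ρ u (p v)) : H →* MulAut G where
  toFun w := MulAut.conj (p w) * ρ w
  map_one' := by
    have hp1 : p 1 = 1 := by simpa using hp 1 1
    simp [hp1]
  map_mul' u v := by
    ext x
    simp [hp, mul_assoc]

lemma MulAut.twistByCocycle_apply (ρ : H →* MulAut G) (p : H → G)
    (hp : ∀ u v, p (u * v) = p u * ρ u (p v)) (w : H) (x : G) :
    twistByCocycle ρ p hp w x = p w * ρ w x * (p w)⁻¹ := rfl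

end Twist

lemma FreeGroup.lift_apply_eq_self {α G : Type*} [Group G] {ρ : α → MulAut G} {x : G}
    (h : ∀ i, ρ i x = x) (w : FreeGroup α) : FreeGroup.lift ρ w x = x := by
  have : (FreeGroup.lift ρ).range ≤ MulAction.stabilizer (MulAut G) x :=
    FreeGroup.range_lift_le (by rintro _ ⟨i, rfl⟩; exact h i)
  exact this ⟨w, rfl⟩

namespace PalWord

lemma of_false : FreeGroup.of false = a := rfl
lemma of_true : FreeGroup.of true = b := rfl

@[simp] lemma iota_a : iota a = a⁻¹ := by simp [iota, a]
@[simp] lemma iota_b : iota b = b⁻¹ := by simp [iota, b]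
@[simp] lemma iota_symm_a : iota.symm a = a⁻¹ := by simp [iota, a]
@[simp] lemma iota_symm_b : iota.symm b = b⁻¹ := by simp [iota, b]

@[simp] lemma Ra_a : Ra a = a := by simp [Ra, a, b]
@[simp] lemma Ra_b : Ra b = b * a := by simp [Ra, a, b]
@[simp] lemma Rb_a : Rb a = a * b := by simp [Rb, a, b]
@[simp] lemma Rb_b : Rb b = b := by simp [Rb, a, b]

@[simp] lemma R_a : R a = Ra := by simp [R, a]
@[simp] lemma R_b : R b = Rb := by simp [R, b]

@[simp] lemma Pal_a : Pal a = a := by simp [Pal, mul_assoc]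
@[simp] lemma Pal_b : Pal b = b := by simp [Pal, mul_assoc]

lemma Pal_mul (u v : F) : Pal (u * v) = Pal u * R u (Pal v) := by
  simp [Pal, mul_assoc]

lemma R_apply_mul_ab (w : F) : R w (a * b) = a * b * Pal w := by
  rw [Pal, mul_inv_cancel_left]

lemma conj_iota_comp_R :
    (MulAut.conj iota).toMonoidHom.comp R = MulAut.twistByCocycle R Pal Pal_mul := by
  refine FreeGroup.ext_hom _ _ fun i =>
    MulEquiv.toMonoidHom_injective <| FreeGroup.ext_hom _ _ fun j => ?_
  cases i <;> cases j <;> simp [of_false, of_true, MulAut.twistByCocycle_apply, mul_assoc]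

lemma iota_R_apply (w x : F) : iota (R w x) = Pal w * R w (iota x) * (Pal w)⁻¹ := by
  simpa [MulAut.twistByCocycle_apply] using
    DFunLike.congr_fun (DFunLike.congr_fun conj_iota_comp_R w) (iota x)

lemma R_apply_commutator (w : F) : R w ⁅b, a⁆ = ⁅b, a⁆ := by
  refine FreeGroup.lift_apply_eq_self (fun i => ?_) w
  cases i <;> simp [commutatorElement_def, mul_assoc]

/-- Every `Pal(w)` is a palindrome: it is fixed by the mirror-image
anti-automorphism `ω` of `F₂`. -/
theorem Pal_palindrome (w : F) : omega (Pal w) = Pal w := by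
  have hba : R w (b * a) = b * a * Pal w := by
    rw [show b * a = ⁅b, a⁆ * (a * b) by group, map_mul, R_apply_commutator, R_apply_mul_ab]
    group
  calc omega (Pal w) = (iota (R w (a * b)))⁻¹ * iota (a * b) := by simp [omega, Pal]
    _ = Pal w * R w (b * a) * (Pal w)⁻¹ * (b * a)⁻¹ := by simp [iota_R_apply, mul_assoc]
    _ = Pal w := by rw [hba]; group

end PalWord
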